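/- arXiv:2402.01072 — 6 statements merged into one kernel-verified Lean document; each statement's English description precedes it below -/
import Mathlib

section
/- Let G be a finite group, H ≤ K ≤ G. If H is weakly SΦ-supplemented in G, then H is weakly SΦ-supplemented in K. -/
open scoped Pointwise

/-- A subgroup `A` is S-permutable in `G` if it permutes with every Sylow subgroup of `G`. -/
def IsSPermutable {G : Type*} [Group G] (A : Subgroup G) : Prop :=
  ∀ (p : ℕ), p.Prime → ∀ Q : Sylow p G,
    (A : Set G) * ((Q : Subgroup G) : Set G) = ((Q : Subgroup G) : Set G) * (A : Set G)

/-- `A_{sG}`: the subgroup generated by all subgroups of `A` that are S-permutable in `G`. -/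
def sCore {G : Type*} [Group G] (A : Subgroup G) : Subgroup G :=
  ⨆ B ∈ {B : Subgroup G | B ≤ A ∧ IsSPermutable B}, B

/-- `A` is weakly SΦ-supplemented in `G` if there is `T ≤ G` with `G = AT` and
`A ∩ T ≤ Φ(A) · A_{sG}`. -/
def WeaklySPhiSupplemented {G : Type*} [Group G] (A : Subgroup G) : Prop :=
  ∃ T : Subgroup G, (A : Set G) * (T : Set G) = Set.univ ∧
    A ⊓ T ≤ (frattini A).map A.subtype ⊔ sCore A

/-- `G` is `p`-nilpotent: it has a normal `p`-complement. -/
def IsPNilpotent (p : ℕ) (G : Type*) [Group G] : Prop :=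
  ∃ H : Subgroup G, H.Normal ∧ (∃ n : ℕ, H.index = p ^ n) ∧ ¬ p ∣ Nat.card H

/-- A group is supersolvable if it has a normal series with cyclic factors. -/
def IsSupersolvable (G : Type*) [Group G] : Prop :=
  ∃ (n : ℕ) (s : Fin (n + 1) → Subgroup G),
    s 0 = ⊥ ∧ s (Fin.last n) = ⊤ ∧ Monotone s ∧ (∀ i, (s i).Normal) ∧
    ∀ i : Fin n, ∃ x : G, s i.succ ≤ s i.castSucc ⊔ Subgroup.zpowers x

/-- `H/K` is a chief factor of `G`. -/
def IsChiefFactor {G : Type*} [Group G] (K H : Subgroup G) : Prop :=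
  K.Normal ∧ H.Normal ∧ K < H ∧
    ∀ L : Subgroup G, L.Normal → K ≤ L → L ≤ H → L = K ∨ L = H

/-- A quasisimple group: perfect, and simple modulo its center. -/
def IsQuasisimple (G : Type*) [Group G] : Prop :=
  commutator G = ⊤ ∧ IsSimpleGroup (G ⧸ Subgroup.center G)

/-- A subgroup is subnormal if there is an ascending chain of successively normal
subgroups reaching `⊤`. -/
def IsSubnormalSubgroup {G : Type*} [Group G] (H : Subgroup G) : Prop :=
  ∃ (n : ℕ) (s : Fin (n + 1) → Subgroup G), s 0 = H ∧ s (Fin.last n) = ⊤ ∧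
    ∀ i : Fin n, s i.castSucc ≤ s i.succ ∧ ((s i.castSucc).subgroupOf (s i.succ)).Normal

/-- The layer `E(G)`: the subgroup generated by all components of `G`. -/
def layer (G : Type*) [Group G] : Subgroup G :=
  ⨆ C ∈ {C : Subgroup G | IsSubnormalSubgroup C ∧ IsQuasisimple C}, C

/-- The Fitting subgroup `F(G)`: generated by all nilpotent normal subgroups. -/
def fittingSubgroup (G : Type*) [Group G] : Subgroup G :=
  ⨆ H ∈ {H : Subgroup G | H.Normal ∧ Group.IsNilpotent H}, H

/-- The generalized Fitting subgroup `F*(G) = E(G) F(G)`. -/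
def genFitting (G : Type*) [Group G] : Subgroup G :=
  layer G ⊔ fittingSubgroup G

/-!
S-permutability descends to intermediate subgroups (Kegel): every Sylow subgroup of `K` has the
form `P ∩ K` for a Sylow subgroup `P` of `G`, and for `B ≤ K` Dedekind's law turns
`B P = P B` into `B (P ∩ K) = (P ∩ K) B`. Hence `H_{sG} ≤ H_{sK}`, while `Φ(H)` does not depend
on the ambient group. If `G = HT` then `K = H (T ∩ K)`, and `H ∩ (T ∩ K) = H ∩ T`, so `T ∩ K`
is the required supplement of `H` in `K`.
-/

open Subgroup

section

variable {G : Type*} [Group G]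

lemma Sylow.exists_map_subtype_eq_inf {p : ℕ} (K : Subgroup G) (Q : Sylow p K) :
    ∃ P : Sylow p G, (Q : Subgroup K).map K.subtype = (P : Subgroup G) ⊓ K := by
  obtain ⟨P, hQP⟩ := (Q.2.map K.subtype).exists_le_sylow
  have hPK : (P : Subgroup G).subgroupOf K = Q :=
    Q.3 P.2.comap_subtype (map_le_iff_le_comap.mp hQP)
  exact ⟨P, by rw [← hPK, subgroupOf_map_subtype]⟩

lemma IsSPermutable.subgroupOf {B K : Subgroup G} (hBK : B ≤ K) (hB : IsSPermutable B) :
    IsSPermutable (B.subgroupOf K) := by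
  intro p hp Q
  obtain ⟨P, hQP⟩ := Q.exists_map_subtype_eq_inf K
  apply Set.image_injective.mpr K.subtype_injective
  rw [Set.image_mul, Set.image_mul, ← coe_map, ← coe_map, hQP, map_subgroupOf_eq_of_le hBK,
    mul_inf_assoc _ _ _ hBK, inf_comm, inf_mul_assoc _ _ _ hBK, hB p hp P, Set.inter_comm]

lemma sCore_le_map_subtype_sCore_subgroupOf {H K : Subgroup G} (hHK : H ≤ K) :
    sCore H ≤ (sCore (H.subgroupOf K)).map K.subtype := by
  refine iSup₂_le fun B hB ↦ ?_
  obtain ⟨hBH, hBperm⟩ := hB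
  rw [← map_subgroupOf_eq_of_le (hBH.trans hHK)]
  exact map_mono <| le_iSup₂_of_le (f := fun (B : Subgroup K) _ ↦ B) (B.subgroupOf K)
    ⟨subgroupOf_mono K hBH, hBperm.subgroupOf (hBH.trans hHK)⟩ le_rfl

lemma map_frattini_le_of_surjective {N : Type*} [Group N] {φ : G →* N}
    (hφ : Function.Surjective φ) : (frattini G).map φ ≤ frattini N :=
  map_le_iff_le_comap.mpr (frattini_le_comap_frattini_of_surjective hφ)

lemma map_subtype_frattini_le_subgroupOf {H K : Subgroup G} (hHK : H ≤ K) :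
    (frattini H).map H.subtype ≤
      ((frattini (H.subgroupOf K)).map (H.subgroupOf K).subtype).map K.subtype := by
  let e : H ≃* H.subgroupOf K := (subgroupOfEquivOfLe hHK).symm
  have hsubtype : H.subtype = (K.subtype.comp (H.subgroupOf K).subtype).comp e.toMonoidHom := rfl
  rw [hsubtype, ← map_map, ← map_map]
  exact map_mono (map_mono (map_frattini_le_of_surjective e.surjective))

lemma mul_subgroupOf_eq_univ {H K T : Subgroup G} (hHK : H ≤ K)
    (hHT : (H : Set G) * (T : Set G) = Set.univ) :
    (H.subgroupOf K : Set K) * (T.subgroupOf K : Set K) = Set.univ := by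
  apply Set.image_injective.mpr K.subtype_injective
  rw [Set.image_mul, ← coe_map, ← coe_map, map_subgroupOf_eq_of_le hHK, subgroupOf_map_subtype,
    mul_inf_assoc _ _ _ hHK, hHT, Set.univ_inter, Set.image_univ, coe_subtype,
    Subtype.range_coe_subtype, SetLike.setOfPred_mem_eq]

end

theorem stmt0_general {G : Type*} [Group G] (H K : Subgroup G) (hHK : H ≤ K)
    (h : WeaklySPhiSupplemented H) :
    WeaklySPhiSupplemented (H.subgroupOf K) := by
  obtain ⟨T, hHT, hHTle⟩ := h
  refine ⟨T.subgroupOf K, mul_subgroupOf_eq_univ hHK hHT, ?_⟩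
  rw [← map_le_map_iff_of_injective K.subtype_injective, Subgroup.map_sup]
  calc (H.subgroupOf K ⊓ T.subgroupOf K).map K.subtype = H ⊓ T := by
        rw [map_inf_eq _ _ _ K.subtype_injective, map_subgroupOf_eq_of_le hHK,
          subgroupOf_map_subtype, inf_left_comm, inf_eq_left.mpr hHK, inf_comm]
    _ ≤ (frattini H).map H.subtype ⊔ sCore H := hHTle
    _ ≤ _ := sup_le_sup (map_subtype_frattini_le_subgroupOf hHK)
        (sCore_le_map_subtype_sCore_subgroupOf hHK)

theorem stmt0 {G : Type*} [Group G] [Finite G] (H K : Subgroup G) (hHK : H ≤ K)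
    (h : WeaklySPhiSupplemented H) :
    WeaklySPhiSupplemented (H.subgroupOf K) :=
  stmt0_general H K hHK h
end

section
/- Let G be a finite group, N ⊴ G, and H ≤ G with N ≤ H. If H is weakly SΦ-supplemented in G, then H/N is weakly SΦ-supplemented in G/N. -/
open scoped Pointwise

/-! The image `T/N` of a supplement `T` of `H` supplements `H/N`. Since `N ≤ H`, the intersection
`H/N ∩ T/N` is the image of `H ∩ T`, and surjective homomorphisms carry Frattini subgroups into
Frattini subgroups and S-permutable subgroups (via Sylow subgroups of the image) to S-permutable
ones. -/

section

variable {G G' : Type*} [Group G] [Group G']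

theorem Subgroup.map_inf_map_le_of_ker_le {f : G →* G'} {H : Subgroup G} (hH : f.ker ≤ H)
    (T : Subgroup G) : H.map f ⊓ T.map f ≤ (H ⊓ T).map f := by
  rintro _ ⟨hfH, t, ht, rfl⟩
  have htH : t ∈ H := by rwa [← Subgroup.comap_map_eq_self hH]
  exact ⟨t, ⟨htH, ht⟩, rfl⟩

theorem Subgroup.coe_map_mul_coe_map (f : G →* G') (H T : Subgroup G) :
    (H.map f : Set G') * (T.map f : Set G') = f '' ((H : Set G) * (T : Set G)) := by
  rw [Set.image_mul, Subgroup.coe_map, Subgroup.coe_map]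

theorem map_subtype_frattini_map_le (f : G →* G') (H : Subgroup G) :
    ((frattini H).map H.subtype).map f ≤ (frattini (H.map f)).map (H.map f).subtype := by
  have hcomm : (H.map f).subtype.comp (f.subgroupMap H) = f.comp H.subtype := rfl
  rw [Subgroup.map_map, ← hcomm, ← Subgroup.map_map]
  exact Subgroup.map_mono <| Subgroup.map_le_iff_le_comap.mpr <|
    frattini_le_comap_frattini_of_surjective (f.subgroupMap_surjective H)

variable [Finite G] {f : G →* G'}

theorem IsSPermutable.map (hf : Function.Surjective f) {B : Subgroup G} (hB : IsSPermutable B) :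
    IsSPermutable (B.map f) := by
  intro p hp Q
  have := Fact.mk hp
  obtain ⟨P, rfl⟩ := Sylow.mapSurjective_surjective hf p Q
  rw [Sylow.coe_mapSurjective, Subgroup.coe_map_mul_coe_map, Subgroup.coe_map_mul_coe_map,
    hB p hp P]

theorem sCore_map_le (hf : Function.Surjective f) (A : Subgroup G) :
    (sCore A).map f ≤ sCore (A.map f) := by
  simp only [sCore, Subgroup.map_iSup, iSup_le_iff]
  intro B hB
  exact le_biSup id (s := {C | C ≤ A.map f ∧ IsSPermutable C})
    ⟨Subgroup.map_mono hB.1, hB.2.map hf⟩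

theorem WeaklySPhiSupplemented.map (hf : Function.Surjective f) {H : Subgroup G}
    (hH : f.ker ≤ H) (h : WeaklySPhiSupplemented H) : WeaklySPhiSupplemented (H.map f) := by
  obtain ⟨T, hHT, hcap⟩ := h
  refine ⟨T.map f, ?_, ?_⟩
  · rw [Subgroup.coe_map_mul_coe_map, hHT, Set.image_univ, hf.range_eq]
  · calc H.map f ⊓ T.map f ≤ (H ⊓ T).map f := Subgroup.map_inf_map_le_of_ker_le hH T
      _ ≤ ((frattini H).map H.subtype ⊔ sCore H).map f := Subgroup.map_mono hcap
      _ ≤ (frattini (H.map f)).map (H.map f).subtype ⊔ sCore (H.map f) := by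
        rw [Subgroup.map_sup]
        exact sup_le_sup (map_subtype_frattini_map_le f H) (sCore_map_le hf H)

end

theorem stmt1 {G : Type*} [Group G] [Finite G] (N H : Subgroup G) [N.Normal]
    (hNH : N ≤ H) (h : WeaklySPhiSupplemented H) :
    WeaklySPhiSupplemented (H.map (QuotientGroup.mk' N)) :=
  h.map (QuotientGroup.mk'_surjective N) (by rwa [QuotientGroup.ker_mk'])
end

section
/- Let P be a nontrivial normal p-subgroup of a finite group G, where p is the smallest prime dividing |G| and exp(P) = p. If every minimal subgroup of P that has no supersolvable supplement in G is weakly SΦ-supplemented in G, then every chief factor of G below P is cyclic (equivalently, of order p). -/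
open scoped Pointwise

/-!
Induct on `H`. Pick `x ∈ H \ K` whose image in `G/K` commutes with the image of a Sylow
`p`-subgroup `S ⊇ H`; it has order `p`.

* If `⟨x⟩` has a complement `T`, then `|G : T| = p` is the smallest prime divisor of `|G|`, so
  `T ⊴ G`. Either `H ∩ T ≤ K` and `|H : K|` divides `p`, or `H/K ≅ (H ∩ T)/(K ∩ T)` is a chief
  factor of smaller order.
* A supersolvable supplement meeting `⟨x⟩` is `G` itself, and in a supersolvable group `H/K`
  embeds in a cyclic factor of the series; having exponent `p`, it has order `p`.
* If `⟨x⟩` is S-permutable, then for `q ≠ p` a Sylow `q`-subgroup `Q` has index `p` in `⟨x⟩Q`,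
  hence is normal there, and `[x, Q] ≤ H ∩ Q = 1`. So `xK` is central in `G/K`, `⟨x⟩K = H`,
  and `H/K` is cyclic of exponent `p`.
* Otherwise `Φ(⟨x⟩) = ⟨x⟩_{sG} = 1`, so the weak SΦ-supplement of `⟨x⟩` is a complement.
-/

open Subgroup
open scoped commutatorElement

theorem Nat.minFac_eq_of_forall_le {p n : ℕ} (hp : p.Prime) (hpn : p ∣ n)
    (hmin : ∀ q : ℕ, q.Prime → q ∣ n → p ≤ q) : n.minFac = p := by
  have hn : n ≠ 1 := fun h => hp.one_lt.ne' (Nat.dvd_one.mp (h ▸ hpn))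
  exact le_antisymm (Nat.minFac_le_of_dvd hp.two_le hpn)
    (hmin _ (Nat.minFac_prime hn) (Nat.minFac_dvd n))

namespace Subgroup

variable {G : Type*} [Group G]

theorem eq_bot_or_eq_of_le_of_prime_card {A B : Subgroup G} (hA : (Nat.card A).Prime)
    (hBA : B ≤ A) : B = ⊥ ∨ B = A := by
  have : Fact (Nat.card A).Prime := ⟨hA⟩
  refine (eq_bot_or_eq_top_of_prime_card (B.subgroupOf A)).imp (fun h => ?_) (fun h => ?_)
  · rwa [subgroupOf_eq_bot, disjoint_of_le_iff_left_eq_bot hBA] at h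
  · exact le_antisymm hBA (subgroupOf_eq_top.mp h)

theorem coe_sup_of_mul_comm {A B : Subgroup G}
    (h : (A : Set G) * (B : Set G) = (B : Set G) * (A : Set G)) :
    ((A ⊔ B : Subgroup G) : Set G) = (A : Set G) * (B : Set G) := by
  let R : Subgroup G :=
    { carrier := (A : Set G) * (B : Set G)
      one_mem' := ⟨1, A.one_mem, 1, B.one_mem, one_mul 1⟩
      mul_mem' := by
        rintro _ _ ⟨a, ha, b, hb, rfl⟩ ⟨a', ha', b', hb', rfl⟩
        obtain ⟨a'', ha'', b'', hb'', hba : a'' * b'' = b * a'⟩ :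
            b * a' ∈ (A : Set G) * (B : Set G) := h ▸ Set.mul_mem_mul hb ha'
        refine ⟨a * a'', A.mul_mem ha ha'', b'' * b', B.mul_mem hb'' hb', ?_⟩
        change a * a'' * (b'' * b') = a * b * (a' * b')
        rw [show a * a'' * (b'' * b') = a * (a'' * b'') * b' by group, hba]
        group
      inv_mem' := by
        rintro _ ⟨a, ha, b, hb, rfl⟩
        rw [mul_inv_rev]
        exact h ▸ Set.mul_mem_mul (B.inv_mem hb) (A.inv_mem ha) }
  refine le_antisymm (sup_le (fun a ha => ⟨a, ha, 1, B.one_mem, mul_one a⟩)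
    (fun b hb => ⟨1, A.one_mem, b, hb, one_mul b⟩) : A ⊔ B ≤ R) ?_
  rintro _ ⟨a, ha, b, hb, rfl⟩
  exact mul_mem_sup ha hb

theorem card_sup_of_mul_comm {A B : Subgroup G}
    (h : (A : Set G) * (B : Set G) = (B : Set G) * (A : Set G)) (hAB : Disjoint A B) :
    Nat.card (A ⊔ B : Subgroup G) = Nat.card A * Nat.card B := by
  have hrange : Set.range (fun g : A × B => (g.1 : G) * g.2) = (A : Set G) * (B : Set G) := by
    ext; simp [Set.mem_mul]
  rw [← Nat.card_prod, ← SetLike.coe_sort_coe, coe_sup_of_mul_comm h, ← hrange,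
    Nat.card_range_of_injective (mul_injective_of_disjoint hAB)]

theorem le_normalizer_of_mul_comm [Finite G] {p : ℕ} (hp : p.Prime)
    (hmin : ∀ q : ℕ, q.Prime → q ∣ Nat.card G → p ≤ q) {A B : Subgroup G}
    (h : (A : Set G) * (B : Set G) = (B : Set G) * (A : Set G)) (hAB : Disjoint A B)
    (hA : Nat.card A = p) : A ≤ normalizer (B : Set G) := by
  have hcard : Nat.card (A ⊔ B : Subgroup G) = p * Nat.card B := by
    rw [card_sup_of_mul_comm h hAB, hA]
  have hindex : (B.subgroupOf (A ⊔ B)).index = p := by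
    have := (B.subgroupOf (A ⊔ B)).index_mul_card
    rw [Nat.card_congr (subgroupOfEquivOfLe le_sup_right).toEquiv, hcard] at this
    exact Nat.eq_of_mul_eq_mul_right Nat.card_pos this
  have hminFac : (Nat.card (A ⊔ B : Subgroup G)).minFac = p :=
    Nat.minFac_eq_of_forall_le hp (hcard ▸ dvd_mul_right p _)
      fun q hq hqd => hmin q hq (hqd.trans (card_subgroup_dvd_card _))
  have := normal_of_index_eq_minFac_card (hindex.trans hminFac.symm)
  exact le_sup_left.trans (le_normalizer_of_normal_subgroupOf le_sup_right)

theorem normal_sup_zpowers_of_mk_mem_center {K : Subgroup G} [K.Normal] {x : G}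
    (hx : (x : G ⧸ K) ∈ center (G ⧸ K)) : (K ⊔ zpowers x).Normal := by
  have : (zpowers (x : G ⧸ K)).Normal :=
    ⟨fun n hn g => by
      rwa [mem_center_iff.mp (zpowers_le.mpr hx hn) g, mul_inv_cancel_right]⟩
  rw [sup_comm, ← QuotientGroup.ker_mk' K, ← comap_map_eq, MonoidHom.map_zpowers]
  exact this.comap _

theorem eq_top_of_le_of_mul_eq_univ {A T : Subgroup G}
    (hAT : A ≤ T) (h : (A : Set G) * (T : Set G) = Set.univ) : T = ⊤ :=
  eq_top_iff.mpr fun g _ => by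
    obtain ⟨a, ha, t, ht, rfl⟩ := h.symm ▸ Set.mem_univ g
    exact T.mul_mem (hAT ha) ht

theorem eq_top_of_forall_sylow_le [Finite G] (U : Subgroup G)
    (h : ∀ q : ℕ, q.Prime → ∃ Q : Sylow q G, (Q : Subgroup G) ≤ U) : U = ⊤ := by
  refine index_eq_one.mp (Nat.eq_one_iff_not_exists_prime_dvd.mpr fun q hq hqU => ?_)
  have : Fact q.Prime := ⟨hq⟩
  obtain ⟨Q, hQU⟩ := h q hq
  exact Q.not_dvd_index (hqU.trans (index_dvd_of_le hQU))

theorem relIndex_dvd_index_of_inf_le {K H T : Subgroup G} [T.Normal] (hKH : K ≤ H)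
    (hHT : H ⊓ T ≤ K) : K.relIndex H ∣ T.index := by
  have := relIndex_mul_relIndex (H ⊓ T) K H hHT hKH
  rw [inf_relIndex_left] at this
  exact (Dvd.intro_left _ this).trans (relIndex_dvd_index_of_normal T H)

theorem relIndex_eq_prime_of_le_sup_zpowers {p : ℕ} (hp : p.Prime)
    {H N : Subgroup G} [N.Normal] {y : G} (hle : H ≤ N ⊔ zpowers y) (hHN : ¬ H ≤ N)
    (hexp : ∀ h ∈ H, h ^ p = 1) : N.relIndex H = p := by
  let W := H.map (QuotientGroup.mk' N)
  have hWy : W ≤ zpowers (y : G ⧸ N) := by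
    have := map_mono (f := QuotientGroup.mk' N) hle
    rwa [map_sup, MonoidHom.map_zpowers, QuotientGroup.map_mk'_self, bot_sup_eq] at this
  have : IsCyclic W := isCyclic_of_le hWy
  have hWp : Monoid.exponent W ∣ p := by
    refine Monoid.exponent_dvd_of_forall_pow_eq_one fun ⟨_, h, hh, hg⟩ => Subtype.ext ?_
    simp only [← hg, OneMemClass.coe_one, SubmonoidClass.mk_pow, ← map_pow, hexp h hh, map_one]
  have hW : Nat.card W ≠ 1 := by
    rw [Ne, card_eq_one, map_eq_bot_iff, QuotientGroup.ker_mk']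
    exact hHN
  rw [← QuotientGroup.ker_mk' N, relIndex_ker, ← IsCyclic.exponent_eq_card]
  exact (hp.eq_one_or_self_of_dvd _ hWp).resolve_left (IsCyclic.exponent_eq_card (α := W) ▸ hW)

end Subgroup

theorem frattini_eq_bot_of_prime_card {G : Type*} [Group G] (hG : (Nat.card G).Prime) :
    frattini G = ⊥ := by
  have : Fact (Nat.card G).Prime := ⟨hG⟩
  have : Finite G := Nat.finite_of_card_ne_zero hG.ne_zero
  have : Nontrivial G := Finite.one_lt_card_iff_nontrivial.mp hG.one_lt
  refine le_bot_iff.mp (frattini_le_coatom ⟨bot_ne_top, fun B hB => ?_⟩)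
  exact (eq_bot_or_eq_top_of_prime_card B).resolve_left hB.ne'

theorem IsSupersolvable.of_surjective {G G' : Type*} [Group G] [Group G'] {f : G →* G'}
    (hf : Function.Surjective f) (hG : IsSupersolvable G) : IsSupersolvable G' := by
  obtain ⟨n, s, h0, hlast, hmono, hnorm, hcyc⟩ := hG
  refine ⟨n, fun i => (s i).map f, by simp [h0], ?_, fun i j hij => map_mono (hmono hij),
    fun i => (hnorm i).map f hf, fun i => ?_⟩
  · simp only [hlast, ← MonoidHom.range_eq_map, MonoidHom.range_eq_top.mpr hf]
  · obtain ⟨x, hx⟩ := hcyc i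
    refine ⟨f x, ?_⟩
    simpa only [Subgroup.map_sup, MonoidHom.map_zpowers] using map_mono (f := f) hx

theorem isComplement'_or_isSupersolvable_of_mul_eq_univ {G : Type*} [Group G]
    {A T : Subgroup G} (hA : (Nat.card A).Prime) (hT : IsSupersolvable T)
    (hAT : (A : Set G) * (T : Set G) = Set.univ) : IsComplement' A T ∨ IsSupersolvable G := by
  refine (eq_bot_or_eq_of_le_of_prime_card hA (inf_le_left : A ⊓ T ≤ A)).imp
    (fun h => isComplement'_of_disjoint_and_mul_eq_univ (disjoint_iff.mpr h) hAT) fun h => ?_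
  obtain rfl := eq_top_of_le_of_mul_eq_univ (inf_eq_left.mp h) hAT
  exact hT.of_surjective (f := (topEquiv : (⊤ : Subgroup G) ≃* G).toMonoidHom) topEquiv.surjective

namespace IsChiefFactor

variable {G : Type*} [Group G] {K H : Subgroup G}

theorem lt (hKH : IsChiefFactor K H) : K < H :=
  hKH.2.2.1

theorem inf_eq_or_le (hKH : IsChiefFactor K H) {N : Subgroup G} [N.Normal] (hKN : K ≤ N) :
    H ⊓ N = K ∨ H ≤ N := by
  have := hKH.2.1
  exact (hKH.2.2.2 (H ⊓ N) inferInstance (le_inf hKH.lt.le hKN) inf_le_left).imp_right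
    inf_eq_left.mp

theorem eq_of_not_le (hKH : IsChiefFactor K H) {L : Subgroup G} [L.Normal] (hKL : K ≤ L)
    (hLH : L ≤ H) (hLK : ¬ L ≤ K) : L = H :=
  (hKH.2.2.2 L inferInstance hKL hLH).resolve_left fun h => hLK h.le

theorem sup_eq (hKH : IsChiefFactor K H) {M : Subgroup G} [M.Normal] (hMH : M ≤ H)
    (hMK : ¬ M ≤ K) : M ⊔ K = H := by
  have := hKH.1
  exact hKH.eq_of_not_le le_sup_right (sup_le hMH hKH.lt.le) fun h => hMK (le_sup_left.trans h)

theorem inf_right (hKH : IsChiefFactor K H) {M : Subgroup G} [M.Normal] (hMH : M ≤ H)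
    (hMK : ¬ M ≤ K) : IsChiefFactor (K ⊓ M) M := by
  have := hKH.1
  refine ⟨inferInstance, inferInstance, inf_le_right.lt_of_ne fun h => hMK (h ▸ inf_le_left),
    fun L hL hKL hLM => ?_⟩
  rcases hKH.2.2.2 (L ⊔ K) inferInstance le_sup_right (sup_le (hLM.trans hMH) hKH.lt.le)
    with h | h
  · exact Or.inl (le_antisymm (le_inf (le_sup_left.trans h.le) hLM) hKL)
  · refine Or.inr (le_antisymm hLM fun m hm => ?_)
    have hm' : m ∈ ((L ⊔ K : Subgroup G) : Set G) ∩ M := ⟨h ▸ hMH hm, hm⟩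
    rw [mul_normal, ← mul_inf_assoc L K M hLM] at hm'
    obtain ⟨l, hl, k, hk, rfl⟩ := hm'
    exact L.mul_mem hl (hKL hk)

theorem relIndex_inf_right (hKH : IsChiefFactor K H) {M : Subgroup G} [M.Normal]
    (hMH : M ≤ H) (hMK : ¬ M ≤ K) : (K ⊓ M).relIndex M = K.relIndex H := by
  have := hKH.1
  rw [inf_relIndex_right, ← relIndex_sup_right, hKH.sup_eq hMH hMK]

theorem exists_inf_eq_le_sup_zpowers (hG : IsSupersolvable G) (hKH : IsChiefFactor K H) :
    ∃ N : Subgroup G, N.Normal ∧ H ⊓ N = K ∧ ∃ y : G, H ≤ N ⊔ zpowers y := by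
  have := hKH.1
  obtain ⟨n, s, h0, hlast, -, hnorm, hcyc⟩ := hG
  have hu (i) : (s i ⊔ K).Normal := by have := hnorm i; infer_instance
  by_contra! hno
  have hall (i : Fin (n + 1)) : H ⊓ (s i ⊔ K) = K := by
    induction i using Fin.induction with
    | zero => rw [h0, bot_sup_eq, inf_eq_right.mpr hKH.lt.le]
    | succ i ih =>
      refine (hKH.inf_eq_or_le le_sup_right).resolve_right fun hle => ?_
      obtain ⟨y, hy⟩ := hcyc i
      refine hno _ (hu i.castSucc) ih y (hle.trans ?_)
      rw [sup_right_comm]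
      exact sup_le_sup_right hy K
  have := hall (Fin.last n)
  rw [hlast, top_sup_eq, inf_top_eq] at this
  exact hKH.lt.ne' this

theorem relIndex_eq_of_isSupersolvable {p : ℕ} (hp : p.Prime)
    (hG : IsSupersolvable G) (hKH : IsChiefFactor K H) (hexp : ∀ h ∈ H, h ^ p = 1) :
    K.relIndex H = p := by
  obtain ⟨N, hN, hHN, y, hle⟩ := hKH.exists_inf_eq_le_sup_zpowers hG
  rw [← hHN, inf_relIndex_left]
  exact relIndex_eq_prime_of_le_sup_zpowers hp hle
    (fun h => hKH.lt.ne' (hHN ▸ (inf_eq_left.mpr h).symm)) hexp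

theorem relIndex_eq_of_mk_mem_center [K.Normal] {p : ℕ} (hp : p.Prime)
    (hKH : IsChiefFactor K H) {x : G} (hxH : x ∈ H) (hxK : x ∉ K)
    (hx : (x : G ⧸ K) ∈ center (G ⧸ K)) (hexp : ∀ h ∈ H, h ^ p = 1) : K.relIndex H = p := by
  have := normal_sup_zpowers_of_mk_mem_center hx
  have hHx := hKH.eq_of_not_le le_sup_left (sup_le hKH.lt.le (zpowers_le.mpr hxH))
    fun h => hxK (h (mem_sup_right (mem_zpowers x)))
  exact relIndex_eq_prime_of_le_sup_zpowers hp hHx.ge hKH.lt.not_ge hexp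

theorem relIndex_eq_of_isComplement' [Finite G] {p : ℕ} (hp : p.Prime)
    (hmin : ∀ q : ℕ, q.Prime → q ∣ Nat.card G → p ≤ q) (hKH : IsChiefFactor K H)
    {x : G} (hxH : x ∈ H) (hx : orderOf x = p) {T : Subgroup G}
    (hT : IsComplement' (zpowers x) T)
    (ih : ∀ H' < H, ∀ K', IsChiefFactor K' H' → K'.relIndex H' = p) : K.relIndex H = p := by
  have := hKH.2.1
  have hTp : T.index = p := by rw [hT.index_eq_card, Nat.card_zpowers, hx]
  have : T.Normal := normal_of_index_eq_minFac_card <| hTp.trans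
    (Nat.minFac_eq_of_forall_le hp (hx ▸ orderOf_dvd_natCard x) hmin).symm
  have hxT : x ∉ T := fun h => hp.ne_one <| by
    rw [← hx, orderOf_eq_one_iff]
    exact (disjoint_def.mp hT.disjoint) (mem_zpowers x) h
  by_cases hHT : H ⊓ T ≤ K
  · refine (hp.eq_one_or_self_of_dvd _ ?_).resolve_left ?_
    · exact hTp ▸ relIndex_dvd_index_of_inf_le hKH.lt.le hHT
    · exact relIndex_eq_one.not.mpr hKH.lt.not_ge
  · rw [← hKH.relIndex_inf_right inf_le_left hHT]
    exact ih _ (inf_lt_left.mpr fun h => hxT (h hxH)) _ (hKH.inf_right inf_le_left hHT)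

end IsChiefFactor

namespace IsPGroup

variable {G : Type*} [Group G] [Finite G] {p : ℕ} [Fact p.Prime]

theorem exists_ne_one_forall_commute {S N : Subgroup G} (hS : IsPGroup p S) (hNS : N ≤ S)
    [N.Normal] (hN : N ≠ ⊥) : ∃ z ∈ N, z ≠ 1 ∧ ∀ s ∈ S, Commute s z := by
  let N' : Subgroup S := N.subgroupOf S
  have hN' : p ∣ Nat.card N' := by
    rw [Nat.card_congr (subgroupOfEquivOfLe hNS).toEquiv]
    obtain ⟨n, hn⟩ := (hS.to_le hNS).exists_card_eq
    rcases n.eq_zero_or_pos with rfl | hpos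
    · exact absurd (card_eq_one.mp (hn.trans (pow_zero p))) hN
    · exact hn ▸ dvd_pow_self p hpos.ne'
  have h1 : (1 : N') ∈ MulAction.fixedPoints (ConjAct S) N' := fun g => by
    ext; simp
  obtain ⟨⟨⟨z, hzS⟩, hzN⟩, hzfix, hz1⟩ :=
    (hS.of_equiv ConjAct.toConjAct).exists_fixed_point_of_prime_dvd_card_of_fixed_point N' hN' h1
  refine ⟨z, mem_subgroupOf.mp hzN, fun h => hz1 (by ext; simpa using h.symm), fun s hs => ?_⟩
  have := congrArg (fun w : N' => ((w : S) : G)) (hzfix (ConjAct.toConjAct ⟨s, hs⟩))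
  simp only [ConjAct.Subgroup.val_conj_smul, ConjAct.smul_def, ConjAct.ofConjAct_toConjAct] at this
  exact (eq_mul_inv_iff_mul_eq.mp this.symm).symm

theorem exists_mem_notMem_forall_commute_mk {S K H : Subgroup G} (hS : IsPGroup p S)
    (hHS : H ≤ S) [K.Normal] [H.Normal] (hKH : K < H) :
    ∃ x ∈ H, x ∉ K ∧ ∀ s ∈ S, Commute (s : G ⧸ K) x := by
  have hH : H.map (QuotientGroup.mk' K) ≠ ⊥ := by
    rw [Ne, Subgroup.map_eq_bot_iff, QuotientGroup.ker_mk']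
    exact hKH.not_ge
  obtain ⟨_, ⟨x, hxH, rfl⟩, hx1, hx⟩ :=
    (hS.map (QuotientGroup.mk' K)).exists_ne_one_forall_commute (map_mono hHS) hH
  refine ⟨x, hxH, fun hxK => hx1 ((QuotientGroup.eq_one_iff x).mpr hxK), fun s hs => ?_⟩
  exact hx _ (mem_map_of_mem _ hs)

end IsPGroup

section SPermutable

variable {G : Type*} [Group G]

theorem IsSPermutable.commute_of_mem_sylow [Finite G] {p : ℕ} [Fact p.Prime]
    (hmin : ∀ q : ℕ, q.Prime → q ∣ Nat.card G → p ≤ q) {x : G} (hx : orderOf x = p)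
    (hsp : IsSPermutable (zpowers x)) {H : Subgroup G} [H.Normal] (hH : IsPGroup p H)
    (hxH : x ∈ H) {q : ℕ} [Fact q.Prime] (hqp : q ≠ p) (Q : Sylow q G) {g : G}
    (hg : g ∈ Q) : Commute g x := by
  have hA : IsPGroup p (zpowers x) := hH.to_le (zpowers_le.mpr hxH)
  have hxQ : x ∈ normalizer ((Q : Subgroup G) : Set G) :=
    le_normalizer_of_mul_comm Fact.out hmin (hsp q Fact.out Q)
      (IsPGroup.disjoint_of_ne p q hqp.symm _ _ hA Q.isPGroup')
      (by rw [Nat.card_zpowers, hx]) (mem_zpowers x)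
  have hcomm : ⁅x, g⁆ ∈ H ⊓ Q := by
    refine ⟨?_, Q.mul_mem ((mem_normalizer_iff.mp hxQ g).mp hg) (Q.inv_mem hg)⟩
    rw [show ⁅x, g⁆ = x * (g * x⁻¹ * g⁻¹) by group]
    exact H.mul_mem hxH (‹H.Normal›.conj_mem _ (H.inv_mem hxH) g)
  rw [(IsPGroup.disjoint_of_ne p q hqp.symm _ _ hH Q.isPGroup').eq_bot, mem_bot,
    commutatorElement_eq_one_iff_commute] at hcomm
  exact hcomm.symm

theorem IsSPermutable.mk_mem_center [Finite G] {p : ℕ} [Fact p.Prime]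
    (hmin : ∀ q : ℕ, q.Prime → q ∣ Nat.card G → p ≤ q) {x : G} (hx : orderOf x = p)
    (hsp : IsSPermutable (zpowers x)) {K H : Subgroup G} [K.Normal] [H.Normal]
    (hH : IsPGroup p H) (hxH : x ∈ H) (S : Sylow p G)
    (hS : ∀ s ∈ S, Commute (s : G ⧸ K) x) : (x : G ⧸ K) ∈ center (G ⧸ K) := by
  let C := (centralizer {(x : G ⧸ K)}).comap (QuotientGroup.mk' K)
  have hC : C = ⊤ := eq_top_of_forall_sylow_le C fun q hq => by
    have : Fact q.Prime := ⟨hq⟩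
    rcases eq_or_ne q p with rfl | hqp
    · exact ⟨S, fun s hs => mem_centralizer_singleton_iff.mpr (hS s hs).eq⟩
    · obtain ⟨Q⟩ := (inferInstance : Nonempty (Sylow q G))
      refine ⟨Q, fun g hg => mem_centralizer_singleton_iff.mpr ?_⟩
      exact ((hsp.commute_of_mem_sylow hmin hx hH hxH hqp Q hg).map (QuotientGroup.mk' K)).eq
  refine mem_center_iff.mpr fun g => ?_
  obtain ⟨g, rfl⟩ := QuotientGroup.mk_surjective g
  exact mem_centralizer_singleton_iff.mp (hC ▸ mem_top g : g ∈ C)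

theorem sCore_eq_bot_of_prime_card {A : Subgroup G} (hA : (Nat.card A).Prime)
    (hns : ¬ IsSPermutable A) : sCore A = ⊥ :=
  le_bot_iff.mp <| iSup₂_le fun _ ⟨hBA, hB⟩ =>
    ((eq_bot_or_eq_of_le_of_prime_card hA hBA).resolve_right fun h => hns (h ▸ hB)).le

theorem WeaklySPhiSupplemented.exists_isComplement' {A : Subgroup G} (hA : (Nat.card A).Prime)
    (h : WeaklySPhiSupplemented A) (hns : ¬ IsSPermutable A) : ∃ T, IsComplement' A T := by
  obtain ⟨T, hAT, hle⟩ := h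
  rw [frattini_eq_bot_of_prime_card hA, Subgroup.map_bot, sCore_eq_bot_of_prime_card hA hns,
    sup_bot_eq, le_bot_iff] at hle
  exact ⟨T, isComplement'_of_disjoint_and_mul_eq_univ (disjoint_iff.mpr hle) hAT⟩

end SPermutable

theorem stmt8_general {G : Type*} [Group G] [Finite G] (p : ℕ) (hp : p.Prime)
    (hmin : ∀ q : ℕ, q.Prime → q ∣ Nat.card G → p ≤ q)
    (P : Subgroup G) [P.Normal] (hP : IsPGroup p P)
    (hexp : ∀ x : G, x ∈ P → x ≠ 1 → orderOf x = p)
    (hsupp : ∀ x : G, x ∈ P → orderOf x = p →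
      ¬ (∃ T : Subgroup G, IsSupersolvable T ∧
          ((Subgroup.zpowers x : Subgroup G) : Set G) * (T : Set G) = Set.univ) →
      WeaklySPhiSupplemented (Subgroup.zpowers x)) :
    ∀ K H : Subgroup G, IsChiefFactor K H → H ≤ P → K.relIndex H = p := by
  have : Fact p.Prime := ⟨hp⟩
  have hpow : ∀ h ∈ P, h ^ p = 1 := fun h hh => by
    rcases eq_or_ne h 1 with rfl | h1
    exacts [one_pow p, hexp h hh h1 ▸ pow_orderOf_eq_one h]
  intro K H hKH hHP
  induction H using WellFoundedLT.induction generalizing K with | ind H ih =>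
  have := hKH.1
  have := hKH.2.1
  obtain ⟨S, hHS⟩ := (hP.to_le hHP).exists_le_sylow
  obtain ⟨x, hxH, hxK, hxS⟩ := S.isPGroup'.exists_mem_notMem_forall_commute_mk hHS hKH.lt
  have hx : orderOf x = p := hexp x (hHP hxH) fun h => hxK (h ▸ K.one_mem)
  have hA : (Nat.card (zpowers x)).Prime := by rwa [Nat.card_zpowers, hx]
  have hcompl (T : Subgroup G) (hT : IsComplement' (zpowers x) T) : K.relIndex H = p :=
    hKH.relIndex_eq_of_isComplement' hp hmin hxH hx hT
      fun H' hH' K' h => ih H' hH' K' h (hH'.le.trans hHP)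
  by_cases hss : ∃ T : Subgroup G, IsSupersolvable T ∧
      ((zpowers x : Subgroup G) : Set G) * (T : Set G) = Set.univ
  · obtain ⟨T, hT, hAT⟩ := hss
    rcases isComplement'_or_isSupersolvable_of_mul_eq_univ hA hT hAT with hT | hG
    · exact hcompl T hT
    · exact hKH.relIndex_eq_of_isSupersolvable hp hG fun h hh => hpow h (hHP hh)
  by_cases hsp : IsSPermutable (zpowers x)
  · exact hKH.relIndex_eq_of_mk_mem_center hp hxH hxK
      (hsp.mk_mem_center hmin hx (hP.to_le hHP) hxH S hxS) fun h hh => hpow h (hHP hh)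
  obtain ⟨T, hT⟩ := (hsupp x (hHP hxH) hx hss).exists_isComplement' hA hsp
  exact hcompl T hT

theorem stmt8 {G : Type*} [Group G] [Finite G] (p : ℕ) (hp : p.Prime)
    (hdvd : p ∣ Nat.card G) (hmin : ∀ q : ℕ, q.Prime → q ∣ Nat.card G → p ≤ q)
    (P : Subgroup G) [P.Normal] (hP : IsPGroup p P) (hPne : P ≠ ⊥)
    (hexp : ∀ x : G, x ∈ P → x ≠ 1 → orderOf x = p)
    (hsupp : ∀ x : G, x ∈ P → orderOf x = p →
      ¬ (∃ T : Subgroup G, IsSupersolvable T ∧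
          ((Subgroup.zpowers x : Subgroup G) : Set G) * (T : Set G) = Set.univ) →
      WeaklySPhiSupplemented (Subgroup.zpowers x)) :
    ∀ K H : Subgroup G, IsChiefFactor K H → H ≤ P → K.relIndex H = p :=
  stmt8_general p hp hmin P hP hexp hsupp
end

section
/- Let G be a finite group with a normal p-subgroup P such that P ≤ Z(G). Then F*(G/P) = F*(G)/P, where F* denotes the generalized Fitting subgroup. -/
open scoped Pointwise

/-!
Let `f : G →* G'` be surjective with central kernel. Images under `f` of components and of
nilpotent normal subgroups are again such, so `f (F*(G)) ≤ F*(G')`. Conversely, the preimage of a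
nilpotent normal subgroup of `G'` is a central extension of it, hence nilpotent. A component `D` of
`G'` is the image of a minimal subnormal subgroup `E` of `G` mapping onto `D`; then `⁅E, E⁆` also
maps onto `⁅D, D⁆ = D`, so `E` is perfect, and by Grün's lemma `E ⧸ Z(E) ≃* D ⧸ Z(D)`, so `E` is
quasisimple.
-/

open Subgroup

section

variable {G G' : Type*} [Group G] [Group G'] {f : G →* G'}

theorem isSubnormalSubgroup_iff_isSubnormal {H : Subgroup G} :
    IsSubnormalSubgroup H ↔ H.IsSubnormal := by
  constructor
  · rintro ⟨n, s, rfl, hs_last, hs⟩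
    induction n with
    | zero => exact hs_last ▸ .top
    | succ n ih =>
      refine .step _ (s 1) (hs 0).1 (ih (fun i ↦ s i.succ) hs_last fun i ↦ hs i.succ) (hs 0).2
  · intro h
    induction h with
    | top => exact ⟨0, fun _ ↦ ⊤, rfl, rfl, fun i ↦ i.elim0⟩
    | step H K hHK _ hN ih =>
      obtain ⟨n, s, rfl, hs_last, hs⟩ := ih
      refine ⟨n + 1, Fin.cons H s, rfl, hs_last, fun i ↦ ?_⟩
      induction i using Fin.cases with
      | zero => exact ⟨hHK, hN⟩
      | succ i => rw [← Fin.succ_castSucc]; exact hs i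

theorem map_mem_center_of_surjective (hf : Function.Surjective f) {z : G}
    (hz : z ∈ center G) : f z ∈ center G' := by
  rw [mem_center_iff] at hz ⊢
  intro g
  obtain ⟨g, rfl⟩ := hf g
  rw [← map_mul, ← map_mul, hz]

theorem subgroupOf_le_center {N : Subgroup G} (hN : N ≤ center G) (H : Subgroup G) :
    N.subgroupOf H ≤ center H := fun _ hx ↦
  mem_center_iff.mpr fun g ↦ Subtype.ext (mem_center_iff.mp (hN hx) g)

theorem comap_center_eq_center_of_ker_le_center [Group.IsPerfect G]
    (hf : Function.Surjective f) (hker : f.ker ≤ center G) :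
    (center G').comap f = center G := by
  refine le_antisymm (fun w hw ↦ ?_) fun z hz ↦ map_mem_center_of_surjective hf hz
  have hw_center : (w : G ⧸ center G) ∈ center (G ⧸ center G) := by
    refine mem_center_iff.mpr fun g ↦ ?_
    induction g using QuotientGroup.induction_on with | H g => ?_
    rw [← QuotientGroup.mk_mul, ← QuotientGroup.mk_mul, QuotientGroup.eq]
    apply hker
    rw [MonoidHom.mem_ker, map_mul, map_inv, map_mul, map_mul,
      mem_center_iff.mp (mem_comap.mp hw) (f g), inv_mul_cancel]
  rw [Group.IsPerfect.center_quotient_center_eq_bot, mem_bot] at hw_center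
  exact (QuotientGroup.eq_one_iff w).mp hw_center

theorem isQuasisimple_iff_of_surjective [Group.IsPerfect G]
    (hf : Function.Surjective f) (hker : f.ker ≤ center G) :
    IsQuasisimple G ↔ IsQuasisimple G' := by
  let ψ := (QuotientGroup.mk' (center G')).comp f
  have hψ_ker : ψ.ker = center G := by
    rw [← MonoidHom.comap_ker, QuotientGroup.ker_mk',
      comap_center_eq_center_of_ker_le_center hf hker]
  let e : G ⧸ center G ≃* G' ⧸ center G' :=
    (QuotientGroup.quotientMulEquivOfEq hψ_ker.symm).trans
      (QuotientGroup.quotientKerEquivOfSurjective ψ ((QuotientGroup.mk'_surjective _).comp hf))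
  have : Group.IsPerfect G' := Group.IsPerfect.ofSurjective hf
  simp only [IsQuasisimple, Group.IsPerfect.commutator_eq_top, true_and]
  exact e.isSimpleGroup_congr

theorem ker_subgroupMap_le_center (hker : f.ker ≤ center G) (H : Subgroup G) :
    (f.subgroupMap H).ker ≤ center H := by
  rw [ker_subgroupMap]
  exact subgroupOf_le_center hker H

theorem Subgroup.IsSubnormal.commutator_self {E : Subgroup G} (hE : E.IsSubnormal) :
    (⁅E, E⁆ : Subgroup G).IsSubnormal := by
  refine .step _ E (commutator_le_self E) hE ?_
  rw [← map_subtype_commutator, subgroupOf, comap_map_eq_self_of_injective E.subtype_injective]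
  infer_instance

theorem exists_isSubnormal_isPerfect_map_eq [Finite G] (hf : Function.Surjective f)
    {D : Subgroup G'} (hD : D.IsSubnormal) [Group.IsPerfect D] :
    ∃ E : Subgroup G, E.IsSubnormal ∧ Group.IsPerfect E ∧ E.map f = D := by
  obtain ⟨E, ⟨hE_sub, hE_map⟩, hE_min⟩ := exists_minimal_of_wellFoundedLT
    (fun E : Subgroup G ↦ E.IsSubnormal ∧ E.map f = D)
    ⟨D.comap f, hD.comap f, map_comap_eq_self_of_surjective hf D⟩
  have hE' : (⁅E, E⁆ : Subgroup G).map f = D := by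
    rw [map_commutator, hE_map, commutator_eq_self]
  have hE_perf : ⁅E, E⁆ = E :=
    (commutator_le_self E).antisymm (hE_min ⟨hE_sub.commutator_self, hE'⟩ (commutator_le_self E))
  exact ⟨E, hE_sub, isPerfect_iff.mpr hE_perf, hE_map⟩

theorem map_layer_le (hf : Function.Surjective f) (hker : f.ker ≤ center G) :
    (layer G).map f ≤ layer G' := by
  refine map_le_iff_le_comap.mpr <| iSup₂_le fun C ⟨hC_sub, hC_qs⟩ ↦ map_le_iff_le_comap.mp ?_
  have : Group.IsPerfect C := Group.isPerfect_def.mpr hC_qs.1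
  refine le_iSup₂_of_le (f := fun C (_ : C ∈ {C | _}) ↦ C) (C.map f) ⟨?_, ?_⟩ le_rfl
  · exact isSubnormalSubgroup_iff_isSubnormal.mpr
      ((isSubnormalSubgroup_iff_isSubnormal.mp hC_sub).map hf)
  · exact (isQuasisimple_iff_of_surjective (f.subgroupMap_surjective C)
      (ker_subgroupMap_le_center hker C)).mp hC_qs

theorem layer_le_map_layer [Finite G] (hf : Function.Surjective f) (hker : f.ker ≤ center G) :
    layer G' ≤ (layer G).map f := by
  refine iSup₂_le fun D ⟨hD_sub, hD_qs⟩ ↦ ?_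
  have : Group.IsPerfect D := Group.isPerfect_def.mpr hD_qs.1
  obtain ⟨E, hE_sub, hE_perf, rfl⟩ :=
    exists_isSubnormal_isPerfect_map_eq hf (isSubnormalSubgroup_iff_isSubnormal.mp hD_sub)
  refine map_mono (le_iSup₂_of_le (f := fun C (_ : C ∈ {C | _}) ↦ C) E ⟨?_, ?_⟩ le_rfl)
  · exact isSubnormalSubgroup_iff_isSubnormal.mpr hE_sub
  · exact (isQuasisimple_iff_of_surjective (f.subgroupMap_surjective E)
      (ker_subgroupMap_le_center hker E)).mpr hD_qs

theorem map_fittingSubgroup_le (hf : Function.Surjective f) :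
    (fittingSubgroup G).map f ≤ fittingSubgroup G' := by
  refine map_le_iff_le_comap.mpr <| iSup₂_le fun H ⟨hH_norm, hH_nil⟩ ↦ map_le_iff_le_comap.mp ?_
  exact le_iSup₂_of_le (f := fun H (_ : H ∈ {H | _}) ↦ H) (H.map f)
    ⟨hH_norm.map f hf, Group.nilpotent_of_surjective _ (f.subgroupMap_surjective H)⟩ le_rfl

theorem fittingSubgroup_le_map_fittingSubgroup (hf : Function.Surjective f)
    (hker : f.ker ≤ center G) : fittingSubgroup G' ≤ (fittingSubgroup G).map f := by
  refine iSup₂_le fun N ⟨hN_norm, hN_nil⟩ ↦ ?_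
  rw [← map_comap_eq_self_of_surjective hf N]
  have hker_comap : (f.subgroupComap N).ker ≤ center (N.comap f) := fun _ hx ↦
    subgroupOf_le_center hker _ (congrArg Subtype.val hx)
  exact map_mono (le_iSup₂_of_le (f := fun H (_ : H ∈ {H | _}) ↦ H) (N.comap f)
    ⟨hN_norm.comap f, Subgroup.isNilpotent_of_ker_le_center _ hker_comap⟩ le_rfl)

theorem map_genFitting_of_ker_le_center [Finite G] (hf : Function.Surjective f)
    (hker : f.ker ≤ center G) :
    (genFitting G).map f = genFitting G' := by
  rw [genFitting, genFitting, Subgroup.map_sup]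
  exact le_antisymm (sup_le_sup (map_layer_le hf hker) (map_fittingSubgroup_le hf))
    (sup_le_sup (layer_le_map_layer hf hker) (fittingSubgroup_le_map_fittingSubgroup hf hker))

end

theorem stmt11_general {G : Type*} [Group G] [Finite G] (P : Subgroup G) [P.Normal]
    (hZ : P ≤ Subgroup.center G) :
    genFitting (G ⧸ P) = (genFitting G).map (QuotientGroup.mk' P) :=
  (map_genFitting_of_ker_le_center (QuotientGroup.mk'_surjective P)
    ((QuotientGroup.ker_mk' P).trans_le hZ)).symm

theorem stmt11 {G : Type*} [Group G] [Finite G] (p : ℕ) (P : Subgroup G) [P.Normal]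
    (hP : IsPGroup p P) (hZ : P ≤ Subgroup.center G) :
    genFitting (G ⧸ P) = (genFitting G).map (QuotientGroup.mk' P) :=
  stmt11_general P hZ
end

section
/- Let A be a finite minimal non-nilpotent group with normal Sylow p-subgroup A_p of exponent p, where p is the smallest prime divisor of |A|, and suppose A_p is not cyclic. Then there exists a subgroup ⟨x⟩ of A_p of order p that is not S-permutable in A. -/
open scoped Pointwise

/-!
Suppose every subgroup of order `p` of the normal Sylow subgroup `P` were S-permutable. For a
`p'`-Sylow subgroup `Q` and `g ∈ P`, the set `⟨g⟩Q` is then a subgroup; it is proper, since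
otherwise Dedekind's rule gives `P = ⟨g⟩`, so it is nilpotent and `g` centralizes `Q`. Hence all
`p'`-Sylow subgroups lie in a proper normal subgroup `N`: the centralizer of `P` if that is proper,
and otherwise Burnside's normal `p`-complement. `N` is nilpotent, so its Sylow subgroups are
characteristic in `N` and therefore normal in `A`. With `P` normal, every Sylow subgroup of `A` is
normal and `A` would be nilpotent.
-/

namespace Subgroup

variable {G : Type*} [Group G]

theorem coe_sup_eq_mul_of_mul_comm {H K : Subgroup G}
    (hHK : (H : Set G) * K = K * H) : ((H ⊔ K : Subgroup G) : Set G) = H * K := by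
  rw [sup_eq_closure_mul]
  refine Set.Subset.antisymm (fun x hx => ?_) subset_closure
  induction hx using closure_induction'' with
  | one => exact ⟨1, one_mem _, 1, one_mem _, mul_one 1⟩
  | mem _ hx => exact hx
  | inv_mem _ hx =>
    obtain ⟨h, hh, k, hk, rfl⟩ := hx
    rw [mul_inv_rev, hHK]
    exact Set.mul_mem_mul (inv_mem hk) (inv_mem hh)
  | mul _ _ _ _ hx hy =>
    obtain ⟨h, hh, k, hk, rfl⟩ := hx
    obtain ⟨h', hh', k', hk', rfl⟩ := hy
    obtain ⟨h'', hh'', k'', hk'', hkh⟩ : k * h' ∈ (H : Set G) * K :=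
      hHK ▸ Set.mul_mem_mul hk hh'
    refine ⟨h * h'', mul_mem hh hh'', k'' * k', mul_mem hk'' hk', ?_⟩
    simp only [mul_assoc, ← mul_assoc h'' k'' k', hkh]

theorem eq_of_le_of_disjoint_of_mul_eq_univ {H K P : Subgroup G} (hHP : H ≤ P)
    (hKP : Disjoint K P) (hHK : (H : Set G) * (K : Set G) = Set.univ) : H = P := by
  refine le_antisymm hHP fun x hx => ?_
  have hmem : x ∈ (H : Set G) * (K : Set G) ∩ P := ⟨hHK ▸ Set.mem_univ x, hx⟩
  rw [← mul_inf_assoc H K P hHP, hKP.eq_bot, coe_bot] at hmem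
  simpa using hmem

theorem le_of_isPGroup_of_index_eq_pow {p r n : ℕ} [Fact p.Prime] [Fact r.Prime] (hrp : r ≠ p)
    {K R : Subgroup G} [K.Normal] (hK : K.index = p ^ n) (hR : IsPGroup r R) : R ≤ K := by
  have hdvd : Nat.card (R.map (QuotientGroup.mk' K)) ∣ p ^ n := by
    rw [← hK, index_eq_card]
    exact card_subgroup_dvd_card _
  rcases (hR.map (QuotientGroup.mk' K)).card_eq_or_dvd with h1 | hr
  · rwa [card_eq_one, map_eq_bot_iff, QuotientGroup.ker_mk'] at h1
  · exact absurd ((Nat.prime_dvd_prime_iff_eq Fact.out Fact.out).mp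
      ((Fact.out : r.Prime).dvd_of_dvd_pow (hr.trans hdvd))) hrp

end Subgroup

open Subgroup

section Finite

variable {G : Type*} [Group G] [Finite G]

theorem commute_of_isPGroup_of_isNilpotent_sup {p q : ℕ} [Fact p.Prime] [Fact q.Prime]
    (hpq : p ≠ q) {H K : Subgroup G} (hH : IsPGroup p H) (hK : IsPGroup q K)
    (hHK : Group.IsNilpotent (H ⊔ K : Subgroup G)) {x y : G} (hx : x ∈ H) (hy : y ∈ K) :
    Commute x y := by
  set M := H ⊔ K
  obtain ⟨P, hP⟩ := (hH.comap_of_injective M.subtype M.subtype_injective).exists_le_sylow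
  obtain ⟨Q, hQ⟩ := (hK.comap_of_injective M.subtype M.subtype_injective).exists_le_sylow
  have hPQ := commute_of_normal_of_disjoint _ _ inferInstance inferInstance
    (IsPGroup.disjoint_of_ne p q hpq _ _ P.isPGroup' Q.isPGroup')
    ⟨x, mem_sup_left hx⟩ ⟨y, mem_sup_right hy⟩ (hP hx) (hQ hy)
  exact hPQ.map M.subtype

theorem Sylow.normal_of_le_of_isNilpotent {r : ℕ} [Fact r.Prime] (R : Sylow r G)
    {N : Subgroup G} [N.Normal] [Group.IsNilpotent N] (hRN : (R : Subgroup G) ≤ N) :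
    (R : Subgroup G).Normal := by
  have : ((R.subtype hRN : Subgroup N)).Characteristic :=
    Sylow.characteristic_of_normal _ inferInstance
  have hmap := ConjAct.normal_of_characteristic_of_normal (H := N) (K := R.subtype hRN)
  rwa [Sylow.coe_subtype, subgroupOf_map_subtype, inf_eq_left.mpr hRN] at hmap

variable {p : ℕ} [Fact p.Prime]

theorem commute_of_isSPermutable_zpowers
    (hpn : ∀ H : Subgroup G, H ≠ ⊤ → Group.IsNilpotent H) {P : Sylow p G}
    (hcyc : ¬IsCyclic (P : Subgroup G)) {g : G} (hg : g ∈ P)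
    (hperm : IsSPermutable (zpowers g)) {r : ℕ} [Fact r.Prime] (hrp : r ≠ p) (Q : Sylow r G)
    {y : G} (hy : y ∈ Q) : Commute g y := by
  have hgP : zpowers g ≤ P := zpowers_le.mpr hg
  have hsup := coe_sup_eq_mul_of_mul_comm (hperm r Fact.out Q)
  have hne : zpowers g ⊔ (Q : Subgroup G) ≠ ⊤ := by
    intro htop
    have hgP : zpowers g = P := eq_of_le_of_disjoint_of_mul_eq_univ hgP
      (IsPGroup.disjoint_of_ne r p hrp _ _ Q.isPGroup' P.isPGroup')
      (by rw [← hsup, htop, coe_top])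
    exact hcyc (hgP ▸ inferInstance)
  exact commute_of_isPGroup_of_isNilpotent_sup hrp.symm (P.isPGroup'.to_le hgP) Q.isPGroup'
    (hpn _ hne) (mem_zpowers g) hy

theorem exists_normal_ne_top_sylow_le_of_le_centralizer {P : Sylow p G}
    [(P : Subgroup G).Normal] (hPbot : (P : Subgroup G) ≠ ⊥)
    (hcent : ∀ (r : ℕ) [Fact r.Prime], r ≠ p → ∀ Q : Sylow r G,
      (Q : Subgroup G) ≤ centralizer ((P : Subgroup G) : Set G)) :
    ∃ N : Subgroup G, N.Normal ∧ N ≠ ⊤ ∧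
      ∀ (r : ℕ) [Fact r.Prime], r ≠ p → ∀ Q : Sylow r G, (Q : Subgroup G) ≤ N := by
  by_cases hC : centralizer ((P : Subgroup G) : Set G) = ⊤
  · have hNC : normalizer ((P : Subgroup G) : Set G) ≤
        centralizer ((P : Subgroup G) : Set G) := by
      rw [hC]; exact le_top
    have hcompl := MonoidHom.ker_transferSylow_isComplement' P hNC
    obtain ⟨n, hn⟩ := P.isPGroup'.exists_card_eq
    refine ⟨(MonoidHom.transferSylow P hNC).ker, inferInstance, fun htop => hPbot ?_,
      fun r _ hrp Q => ?_⟩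
    · exact isComplement'_top_left.mp (htop ▸ hcompl)
    · exact le_of_isPGroup_of_index_eq_pow hrp (by rw [hcompl.symm.index_eq_card, hn])
        Q.isPGroup'
  · exact ⟨_, inferInstance, hC, hcent⟩

end Finite

theorem stmt18_general {A : Type*} [Group A] [Finite A] (p : ℕ) (hp : p.Prime)
    (hpn : ∀ H : Subgroup A, H ≠ ⊤ → Group.IsNilpotent H)
    (hA : ¬ Group.IsNilpotent A)
    (P : Sylow p A) (hnorm : (P : Subgroup A).Normal)
    (hexp : Monoid.exponent (P : Subgroup A) = p)
    (hcyc : ¬ IsCyclic (P : Subgroup A)) :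
    ∃ x : A, x ∈ P ∧ orderOf x = p ∧ ¬ IsSPermutable (Subgroup.zpowers x) := by
  have : Fact p.Prime := ⟨hp⟩
  by_contra! hperm
  have hPbot : (P : Subgroup A) ≠ ⊥ := fun h => hcyc (h ▸ inferInstance)
  have : Nontrivial (P : Subgroup A) := (nontrivial_iff_ne_bot _).mpr hPbot
  have hcent : ∀ (r : ℕ) [Fact r.Prime], r ≠ p → ∀ Q : Sylow r A,
      (Q : Subgroup A) ≤ centralizer ((P : Subgroup A) : Set A) := by
    intro r _ hrp Q y hy
    refine mem_centralizer_iff.mpr fun g hg => ?_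
    rcases eq_or_ne g 1 with rfl | hg1
    · simp
    have hord : orderOf g = p := by
      rw [← orderOf_mk g hg]
      exact (Monoid.exponent_eq_prime_iff hp).mp hexp _ (by simpa using hg1)
    exact (commute_of_isSPermutable_zpowers hpn hcyc hg (hperm g hg hord) hrp Q hy).eq
  obtain ⟨N, hN, hNtop, hQN⟩ := exists_normal_ne_top_sylow_le_of_le_centralizer hPbot hcent
  have := hpn N hNtop
  refine hA ((Group.isNilpotent_of_finite_tfae.out 0 3).mpr ?_)
  intro r _ R
  rcases eq_or_ne r p with rfl | hrp
  · have := Sylow.unique_of_normal P hnorm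
    rwa [Subsingleton.elim R P]
  · exact R.normal_of_le_of_isNilpotent (hQN r hrp R)

theorem stmt18 {A : Type*} [Group A] [Finite A] (p : ℕ) (hp : p.Prime)
    (hdvd : p ∣ Nat.card A) (hmin : ∀ q : ℕ, q.Prime → q ∣ Nat.card A → p ≤ q)
    (hpn : ∀ H : Subgroup A, H ≠ ⊤ → Group.IsNilpotent H)
    (hA : ¬ Group.IsNilpotent A)
    (P : Sylow p A) (hnorm : (P : Subgroup A).Normal)
    (hexp : Monoid.exponent (P : Subgroup A) = p)
    (hcyc : ¬ IsCyclic (P : Subgroup A)) :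
    ∃ x : A, x ∈ P ∧ orderOf x = p ∧ ¬ IsSPermutable (Subgroup.zpowers x) :=
  stmt18_general p hp hpn hA P hnorm hexp hcyc
end

section
/- Let G be a finite group, P a normal Sylow p-subgroup of G with Q a Sylow q-subgroup (q ≠ p) such that G = PQ, P/Φ(P) a chief factor of G, and x ∈ P an element of order 4 (p = 2). If ⟨x⟩ is weakly SΦ-supplemented in G and ⟨x⟩ is not S-permutable in G, then P = ⟨x⟩, i.e., P is cyclic of order 4. -/
/-!
In the cyclic group `⟨x⟩` of order 4 every subgroup not containing `x` lies in `⟨x²⟩`; this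
applies to `Φ(⟨x⟩)` and, as `⟨x⟩` is not S-permutable, to `⟨x⟩_{sG}`. Hence a supplement `T` of
`⟨x⟩` with `⟨x⟩ ∩ T ≤ Φ(⟨x⟩)⟨x⟩_{sG}` misses `x`. By Dedekind's law `P = ⟨x⟩(P ∩ T)`, and
`L = Φ(P)(P ∩ T)` is normal in `G = PT`: `T` normalizes it, and so does `P` since `P' ≤ Φ(P)`.
As `P/Φ(P)` is a chief factor, `L = Φ(P)` or `L = P`, and since `Φ(P)` consists of non-generators
this gives `P = ⟨x⟩` or `P ≤ T`; the latter is impossible because `x ∉ T`.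
-/

open scoped Pointwise

open Subgroup

section GroupTheory

variable {G : Type*} [Group G]

theorem Subgroup.eq_of_sup_map_frattini_eq {H K : Subgroup G} [Finite H] (hKH : K ≤ H)
    (h : K ⊔ (frattini H).map H.subtype = H) : K = H := by
  have hsup : K.subgroupOf H ⊔ frattini H = ⊤ := by
    apply map_injective H.subtype_injective
    rwa [map_sup, subgroupOf_map_subtype, inf_eq_left.mpr hKH, ← MonoidHom.range_eq_map,
      range_subtype]
  exact le_antisymm hKH (subgroupOf_eq_top.mp (frattini_nongenerating hsup))

theorem commutator_le_of_isCoatom {M : Subgroup G} [M.Normal] (hM : IsCoatom M) :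
    commutator G ≤ M := by
  rw [commutator_eq_closure, closure_le]
  rintro _ ⟨a, b, rfl⟩
  let π := QuotientGroup.mk' M
  have hM_le : M ≤ (centralizer {π a}).comap π := fun m hm => by
    simp [π, (QuotientGroup.eq_one_iff m).mpr hm]
  have hab : Commute (π a) (π b) := by
    rcases hM.le_iff.mp hM_le with htop | heq
    · exact (mem_centralizer_singleton_iff.mp (htop.ge (mem_top b))).symm
    · have ha : a ∈ M := heq ▸ mem_centralizer_singleton_iff.mpr rfl
      simp [π, (QuotientGroup.eq_one_iff a).mpr ha]
  rw [SetLike.mem_coe, ← QuotientGroup.eq_one_iff, ← QuotientGroup.mk'_apply,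
    map_commutatorElement, commutatorElement_eq_one_iff_commute]
  exact hab

theorem commutator_le_frattini [Group.IsNilpotent G] : commutator G ≤ frattini G :=
  le_iInf₂ fun M hM =>
    haveI := Group.normalizerCondition_of_isNilpotent.normal_of_coatom M hM
    commutator_le_of_isCoatom hM

theorem Subgroup.commutator_le_map_frattini (H : Subgroup G) [Group.IsNilpotent H] :
    ⁅H, H⁆ ≤ (frattini H).map H.subtype := by
  rw [← map_subtype_commutator]
  exact map_mono commutator_le_frattini

theorem Subgroup.le_sup_inf_of_mul_eq_univ {A T H : Subgroup G} (hAH : A ≤ H)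
    (hAT : (A : Set G) * (T : Set G) = Set.univ) : H ≤ A ⊔ H ⊓ T := by
  intro h hh
  have : h ∈ (A : Set G) * ↑(T ⊓ H) := by
    rw [mul_inf_assoc _ _ _ hAH, hAT]
    exact ⟨trivial, hh⟩
  obtain ⟨a, ha, t, ht, rfl⟩ := this
  exact mul_mem (mem_sup_left ha) (mem_sup_right ⟨ht.2, ht.1⟩)

theorem Subgroup.sup_eq_top_of_mul_eq_univ {A T : Subgroup G}
    (hAT : (A : Set G) * (T : Set G) = Set.univ) : A ⊔ T = ⊤ := by
  refine eq_top_iff.mpr fun g _ => ?_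
  obtain ⟨a, ha, t, ht, rfl⟩ : g ∈ (A : Set G) * (T : Set G) := hAT ▸ Set.mem_univ g
  exact mul_mem (mem_sup_left ha) (mem_sup_right ht)

theorem Subgroup.normal_sup_inf_of_commutator_le {N M T : Subgroup G} [N.Normal] [M.Normal]
    (hMN : M ≤ N) (hNN : ⁅N, N⁆ ≤ M) (hNT : N ⊔ T = ⊤) : (M ⊔ N ⊓ T).Normal := by
  rw [← normalizer_eq_top_iff, eq_top_iff, ← hNT]
  refine sup_le ?_ ?_
  · rw [le_normalizer_iff_commutator_le_right]
    exact (commutator_mono le_rfl (sup_le hMN inf_le_left)).trans (hNN.trans le_sup_left)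
  · refine le_trans (le_inf le_normalizer_of_normal ?_)
      (normalizer_inf_normalizer_le_normalizer_sup _ _)
    exact (le_inf le_normalizer_of_normal T.le_normalizer).trans inf_normalizer_le_normalizer_inf

theorem le_zpowers_sq_of_notMem {x : G} {k : ℕ} (ho : orderOf x = 2 ^ k) {B : Subgroup G}
    (hB : B ≤ zpowers x) (hxB : x ∉ B) : B ≤ zpowers (x ^ 2) := by
  intro b hb
  obtain ⟨n, rfl⟩ := hB hb
  rcases n.even_or_odd with ⟨m, rfl⟩ | hn
  · exact ⟨m, by simp only [← zpow_natCast, ← zpow_mul]; congr 1; push_cast; ring⟩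
  · have hcop : n.gcd (orderOf x) = 1 := by
      rw [ho, Int.gcd_eq_natAbs_gcd_natAbs, Int.natAbs_natCast]
      exact Nat.Coprime.pow_right k (Nat.coprime_two_right.mpr (Int.natAbs_odd.mpr hn))
    exact absurd (zpowers_le.mpr hb (mem_zpowers_zpow_iff.mpr hcop)) hxB

theorem notMem_map_frattini_zpowers [Finite G] {x : G} (hx : x ≠ 1) :
    x ∉ (frattini (zpowers x)).map (zpowers x).subtype := fun h =>
  hx <| zpowers_eq_bot.mp <| (eq_of_sup_map_frattini_eq bot_le <| by
    rw [bot_sup_eq]; exact le_antisymm (map_subtype_le _) (zpowers_le.mpr h)).symm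

theorem notMem_of_zpowers_inf_le [Finite G] {x : G} {k : ℕ} (hk : k ≠ 0)
    (ho : orderOf x = 2 ^ k) (hns : ¬ IsSPermutable (zpowers x)) {T : Subgroup G}
    (hT : zpowers x ⊓ T ≤ (frattini (zpowers x)).map (zpowers x).subtype ⊔ sCore (zpowers x)) :
    x ∉ T := by
  have hx : x ≠ 1 := by
    rintro rfl
    exact (Nat.one_lt_two_pow hk).ne (orderOf_one.symm.trans ho)
  have hΦ := le_zpowers_sq_of_notMem ho (map_subtype_le _) (notMem_map_frattini_zpowers hx)
  have hsCore : sCore (zpowers x) ≤ zpowers (x ^ 2) := iSup₂_le fun B ⟨hBA, hBs⟩ =>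
    le_zpowers_sq_of_notMem ho hBA fun hxB => hns (le_antisymm hBA (zpowers_le.mpr hxB) ▸ hBs)
  intro hxT
  have := mem_zpowers_pow_iff.mp (hT.trans (sup_le hΦ hsCore) ⟨mem_zpowers x, hxT⟩)
  rw [ho, Nat.gcd_eq_left (dvd_pow_self 2 hk)] at this
  exact absurd this (by norm_num)

end GroupTheory

theorem stmt19_general {G : Type*} [Group G] [Finite G]
    (P : Sylow 2 G)
    (hchief : IsChiefFactor ((frattini (P : Subgroup G)).map (P : Subgroup G).subtype)
      (P : Subgroup G))
    (x : G) (hx : x ∈ P) (ho : orderOf x = 4)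
    (hw : WeaklySPhiSupplemented (Subgroup.zpowers x))
    (hns : ¬ IsSPermutable (Subgroup.zpowers x)) :
    (P : Subgroup G) = Subgroup.zpowers x := by
  obtain ⟨-, hPn, -, hmin⟩ := hchief
  obtain ⟨T, hAT, hT⟩ := hw
  have hxT : x ∉ T := notMem_of_zpowers_inf_le two_ne_zero ho hns hT
  have hAP : zpowers x ≤ P := zpowers_le.mpr hx
  have hPAT : (P : Subgroup G) ≤ zpowers x ⊔ P ⊓ T := le_sup_inf_of_mul_eq_univ hAP hAT
  have hPT : (P : Subgroup G) ⊔ T = ⊤ :=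
    top_le_iff.mp ((sup_eq_top_of_mul_eq_univ hAT).ge.trans (sup_le_sup_right hAP _))
  have : Group.IsNilpotent P := P.isPGroup'.isNilpotent
  have hL := normal_sup_inf_of_commutator_le (map_subtype_le _) (commutator_le_map_frattini _) hPT
  rcases hmin _ hL le_sup_left (sup_le (map_subtype_le _) inf_le_left) with hLΦ | hLP
  · refine (eq_of_sup_map_frattini_eq hAP (le_antisymm (sup_le hAP (map_subtype_le _)) ?_)).symm
    exact hPAT.trans (sup_le_sup_left (le_sup_right.trans hLΦ.le) _)
  · exact absurd ((eq_of_sup_map_frattini_eq inf_le_left (by rwa [sup_comm] at hLP)).ge hx).2 hxT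

theorem stmt19 {G : Type*} [Group G] [Finite G] (q : ℕ) (hq : q.Prime) (hq2 : q ≠ 2)
    (P : Sylow 2 G) (hnorm : (P : Subgroup G).Normal) (Q : Sylow q G)
    (hPQ : ((P : Subgroup G) : Set G) * ((Q : Subgroup G) : Set G) = Set.univ)
    (hchief : IsChiefFactor ((frattini (P : Subgroup G)).map (P : Subgroup G).subtype)
      (P : Subgroup G))
    (x : G) (hx : x ∈ P) (ho : orderOf x = 4)
    (hw : WeaklySPhiSupplemented (Subgroup.zpowers x))
    (hns : ¬ IsSPermutable (Subgroup.zpowers x)) :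
    (P : Subgroup G) = Subgroup.zpowers x :=
  stmt19_general P hchief x hx ho hw hns
end
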